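/- arXiv:1908.07711 — 2 statements merged into one kernel-verified Lean document; each statement's English description precedes it below -/
import Mathlib

section
/- For every z ∈ ℂ with |z| ≥ 1, the function φ_r satisfies the functional equation φ_r(z^d) = d · z^{d−1} · φ_r(z) + z^r. -/
/-!
Write `φ_r(z) = -z T(z)` with `T(z) = Σ_{k ≥ 0} d^{-(k+1)} z^{-d^k (d-r)}`. Replacing `z` by `z^d`
shifts `T` by one index, `T(z^d) = d T(z) - z^{-(d-r)}`, and the dropped `k = 0` term is what
produces `z^d z^{-(d-r)} = z^r`. Absolute convergence for `|z| ≥ 1` comes from the geometric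
majorant `Σ d^{-k}`.
-/

/-- The first-order coefficient function
`φ_r(z) = −z Σ_{k≥1} d^{−k} z^{−d^{k−1}(d−r)}` of the conjugacy `Φ_P` between
`Q(z) = z^d` and `P`. -/
noncomputable def phi (d r : ℕ) (z : ℂ) : ℂ :=
  - z * ∑' k : ℕ, ((d : ℂ) ^ (k + 1))⁻¹ * (z ^ (d ^ k * (d - r)))⁻¹

theorem summable_inv_pow_mul_inv_pow {𝕜 : Type*} [NormedField 𝕜] [CompleteSpace 𝕜] {c z : 𝕜}
    (hc : 1 < ‖c‖) (hz : 1 ≤ ‖z‖) (n : ℕ → ℕ) :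
    Summable fun k => (c ^ k)⁻¹ * (z ^ n k)⁻¹ := by
  refine .of_norm_bounded
    (summable_geometric_of_lt_one (by positivity) (inv_lt_one_of_one_lt₀ hc)) fun k => ?_
  rw [norm_mul, norm_inv, norm_inv, norm_pow, norm_pow, inv_pow]
  exact mul_le_of_le_one_right (by positivity) (inv_le_one_of_one_le₀ (one_le_pow₀ hz))

noncomputable def phiSeries (d m : ℕ) (z : ℂ) : ℂ :=
  ∑' k : ℕ, ((d : ℂ) ^ (k + 1))⁻¹ * (z ^ (d ^ k * m))⁻¹

theorem phi_eq_neg_mul_phiSeries (d r : ℕ) (z : ℂ) : phi d r z = -z * phiSeries d (d - r) z :=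
  rfl

theorem phiSeries_pow {d : ℕ} (hd : 2 ≤ d) {z : ℂ} (hz : 1 ≤ ‖z‖) (m : ℕ) :
    phiSeries d m (z ^ d) = d * phiSeries d m z - (z ^ m)⁻¹ := by
  have hd0 : (d : ℂ) ≠ 0 := Nat.cast_ne_zero.mpr (by omega)
  have hsum : Summable fun k => ((d : ℂ) ^ (k + 1))⁻¹ * (z ^ (d ^ k * m))⁻¹ := by
    have hc : 1 < ‖(d : ℂ)‖ := by rw [Complex.norm_natCast]; exact_mod_cast hd
    refine ((summable_inv_pow_mul_inv_pow hc hz (fun k => d ^ k * m)).mul_left (d : ℂ)⁻¹).congr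
      fun k => ?_
    rw [pow_succ', mul_inv, mul_assoc]
  have hshift (k : ℕ) : ((d : ℂ) ^ (k + 1 + 1))⁻¹ * (z ^ (d ^ (k + 1) * m))⁻¹
      = (d : ℂ)⁻¹ * (((d : ℂ) ^ (k + 1))⁻¹ * ((z ^ d) ^ (d ^ k * m))⁻¹) := by
    rw [← pow_mul, pow_succ' d k, mul_assoc, pow_succ' (d : ℂ) (k + 1), mul_inv, mul_assoc]
  rw [phiSeries, phiSeries, hsum.tsum_eq_zero_add]
  simp only [hshift, tsum_mul_left, zero_add, pow_one, pow_zero, one_mul]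
  field_simp
  ring

/-- For `|z| ≥ 1`, the functional equation `φ_r(z^d) = d z^{d−1} φ_r(z) + z^r` holds. -/
theorem phi_functional_equation (d r : ℕ) (hd : 2 ≤ d) (hr : r ≤ d - 2)
    (z : ℂ) (hz : 1 ≤ ‖z‖) :
    phi d r (z ^ d) = (d : ℂ) * z ^ (d - 1) * phi d r z + z ^ r := by
  have hz0 : z ≠ 0 := norm_pos_iff.mp (by linarith)
  have hzd : z ^ (d - 1) * z = z ^ d := pow_sub_one_mul (by omega) z
  have hzr : z ^ d * (z ^ (d - r))⁻¹ = z ^ r := by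
    rw [← pow_sub₀ z hz0 (Nat.sub_le d r), Nat.sub_sub_self (by omega)]
  rw [phi_eq_neg_mul_phiSeries, phi_eq_neg_mul_phiSeries, phiSeries_pow hd hz]
  linear_combination (d * phiSeries d (d - r) z) * hzd + hzr
end

section
/- Let d ≥ 2 be an integer and let g : S¹ → ℂ be a continuous function on the unit circle S¹ = {z ∈ ℂ : |z| = 1}. Then there exists exactly one continuous function φ : S¹ → ℂ such that φ(z^d) = d · z^{d−1} · φ(z) + g(z) for every z ∈ S¹. -/
/-!
Dividing by the multiplier, the equation `φ (p z) = a z • φ z + g z` says that `φ` is a fixed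
point of `φ ↦ (a ·)⁻¹ • (φ ∘ p - g)` on `C(X, E)`. When `‖a‖ ≥ K > 1` this map is `K⁻¹`-Lipschitz
for the sup metric, so the Banach fixed point theorem gives exactly one continuous solution.
On the circle with `p z = z ^ d` and `a z = d z ^ (d - 1)` one has `‖a‖ = d ≥ 2`.
-/

open NNReal

namespace ContinuousMap

variable {X 𝕜 E : Type*} [TopologicalSpace X] [NormedField 𝕜] [NormedAddCommGroup E]
  [NormedSpace 𝕜 E]

noncomputable def linearizedConjugacyOperator (p : C(X, X)) (a : C(X, 𝕜)) (ha : ∀ z, a z ≠ 0)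
    (g : C(X, E)) (φ : C(X, E)) : C(X, E) where
  toFun z := (a z)⁻¹ • (φ (p z) - g z)
  continuous_toFun :=
    ((map_continuous a).inv₀ ha).smul ((φ.continuous.comp p.continuous).sub g.continuous)

theorem isFixedPt_linearizedConjugacyOperator_iff (p : C(X, X)) (a : C(X, 𝕜))
    (ha : ∀ z, a z ≠ 0) (g φ : C(X, E)) :
    Function.IsFixedPt (linearizedConjugacyOperator p a ha g) φ ↔
      ∀ z, φ (p z) = a z • φ z + g z := by
  simp only [Function.IsFixedPt, ContinuousMap.ext_iff]
  refine forall_congr' fun z => ?_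
  rw [linearizedConjugacyOperator, coe_mk, inv_smul_eq_iff₀ (ha z), sub_eq_iff_eq_add, eq_comm]

theorem lipschitzWith_linearizedConjugacyOperator [CompactSpace X] (p : C(X, X)) (a : C(X, 𝕜))
    (ha : ∀ z, a z ≠ 0) (g : C(X, E)) {K : ℝ≥0} (hK : 0 < K) (haK : ∀ z, (K : ℝ) ≤ ‖a z‖) :
    LipschitzWith K⁻¹ (linearizedConjugacyOperator p a ha g) := by
  refine LipschitzWith.of_dist_le_mul fun φ ψ => (dist_le (by positivity)).mpr fun z => ?_
  calc dist ((a z)⁻¹ • (φ (p z) - g z)) ((a z)⁻¹ • (ψ (p z) - g z))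
      = ‖a z‖⁻¹ * dist (φ (p z)) (ψ (p z)) := by
        rw [dist_smul₀, dist_sub_right, norm_inv]
    _ ≤ (K : ℝ)⁻¹ * dist φ ψ := by
        gcongr
        · exact haK z
        · exact dist_apply_le_dist (p z)

theorem existsUnique_continuous_solution [CompactSpace X] [CompleteSpace E] (p : C(X, X))
    (a : C(X, 𝕜)) (g : C(X, E)) {K : ℝ≥0} (hK : 1 < K) (haK : ∀ z, (K : ℝ) ≤ ‖a z‖) :
    ∃! φ : X → E, Continuous φ ∧ ∀ z, φ (p z) = a z • φ z + g z := by
  have hK₀ : 0 < K := zero_lt_one.trans hK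
  have ha : ∀ z, a z ≠ 0 := fun z => norm_pos_iff.mp ((NNReal.coe_pos.mpr hK₀).trans_le (haK z))
  have hT : ContractingWith K⁻¹ (linearizedConjugacyOperator p a ha g) :=
    ⟨inv_lt_one_of_one_lt₀ hK, lipschitzWith_linearizedConjugacyOperator p a ha g hK₀ haK⟩
  refine ⟨hT.fixedPoint, ⟨map_continuous _,
    (isFixedPt_linearizedConjugacyOperator_iff p a ha g _).mp hT.fixedPoint_isFixedPt⟩, ?_⟩
  rintro ψ ⟨hψ, hψ_eq⟩
  exact congrArg DFunLike.coe <| hT.fixedPoint_unique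
    ((isFixedPt_linearizedConjugacyOperator_iff p a ha g ⟨ψ, hψ⟩).mpr hψ_eq)

end ContinuousMap

instance compactSpace_unitCircle : CompactSpace {z : ℂ // ‖z‖ = 1} :=
  (isCompact_iff_compactSpace (s := {z : ℂ | ‖z‖ = 1})).mp <| by
    simpa only [Metric.sphere, dist_zero_right] using isCompact_sphere (0 : ℂ) 1

/-- For `d ≥ 2` and a continuous `g` on the unit circle, there exists exactly one
continuous `φ` on the unit circle satisfying the linearized conjugacy equation
`φ(z^d) = d z^{d−1} φ(z) + g(z)` for every `z` on the circle. -/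
theorem linearized_conjugacy_equation_unique_solution (d : ℕ) (hd : 2 ≤ d)
    (g : ℂ → ℂ) (hg : ContinuousOn g {z : ℂ | ‖z‖ = 1}) :
    ∃! φ : {z : ℂ // ‖z‖ = 1} → ℂ, Continuous φ ∧
      ∀ z : {z : ℂ // ‖z‖ = 1},
        φ ⟨(z : ℂ) ^ d, by rw [norm_pow, z.prop, one_pow]⟩
          = (d : ℂ) * (z : ℂ) ^ (d - 1) * φ z + g (z : ℂ) := by
  let p : C({z : ℂ // ‖z‖ = 1}, {z : ℂ // ‖z‖ = 1}) :=
    ⟨fun z => ⟨(z : ℂ) ^ d, by rw [norm_pow, z.prop, one_pow]⟩, by fun_prop⟩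
  let a : C({z : ℂ // ‖z‖ = 1}, ℂ) := ⟨fun z => (d : ℂ) * (z : ℂ) ^ (d - 1), by fun_prop⟩
  have ha : ∀ z, ((d : ℝ≥0) : ℝ) ≤ ‖a z‖ := fun z => by
    simp [a, z.prop]
  exact ContinuousMap.existsUnique_continuous_solution p a ⟨_, hg.domRestrict⟩
    (by exact_mod_cast hd) ha
end
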